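/- Let S be a finite nonempty set of squares of the n×n board and let C be a positive integer. If there is no collection of C − 1 diagonals such that every square of S lies on one of them, then there exists a family of at most 2C diagonals, each containing at least one square of S, the sum of whose lengths is at least n·C. -/

import Mathlib

/-- The n×n board: squares (x,y) ∈ ℤ×ℤ with 1 ≤ x ≤ n and 1 ≤ y ≤ n. -/
noncomputable def board (n : ℕ) : Finset (ℤ × ℤ) := Finset.Icc 1 (n : ℤ) ×ˢ Finset.Icc 1 (n : ℤ)

/-- A line of the board: a row (fixed y), a column (fixed x), a positive
diagonal (fixed x − y), or a negative diagonal (fixed x + y). -/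
inductive Line : Type where
  | row : ℤ → Line
  | col : ℤ → Line
  | posDiag : ℤ → Line
  | negDiag : ℤ → Line
deriving DecidableEq

/-- The defining condition for a point to be on a given line. -/
def Line.pred : Line → ℤ × ℤ → Prop
  | .row b, p => p.2 = b
  | .col a, p => p.1 = a
  | .posDiag d, p => p.1 - p.2 = d
  | .negDiag s, p => p.1 + p.2 = s

instance (L : Line) (p : ℤ × ℤ) : Decidable (L.pred p) :=
  match L with
  | .row b => inferInstanceAs (Decidable (p.2 = b))
  | .col a => inferInstanceAs (Decidable (p.1 = a))
  | .posDiag d => inferInstanceAs (Decidable (p.1 - p.2 = d))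
  | .negDiag s => inferInstanceAs (Decidable (p.1 + p.2 = s))

/-- The set of squares of the n×n board lying on a line. -/
noncomputable def Line.squares (n : ℕ) (L : Line) : Finset (ℤ × ℤ) := (board n).filter L.pred

/-- The length of a line: its number of board squares. -/
noncomputable def Line.length (n : ℕ) (L : Line) : ℕ := (L.squares n).card

/-- Whether a line is a diagonal (of either orientation). -/
def Line.isDiag : Line → Prop
  | .posDiag _ => True
  | .negDiag _ => True
  | _ => False

/-- The set of board squares attacked by a placement S of queens: squares q on
the board such that some queen p ∈ S with p ≠ q shares a row, column, or
diagonal with q. -/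
noncomputable def attacked (n : ℕ) (S : Finset (ℤ × ℤ)) : Finset (ℤ × ℤ) :=
  S.biUnion fun p => (board n).filter fun q =>
    q ≠ p ∧ (p.1 = q.1 ∨ p.2 = q.2 ∨ p.1 - p.2 = q.1 - q.2 ∨ p.1 + p.2 = q.1 + q.2)

/-- G(m) = ⌊m²/12⌋ + 1 if m ≡ 3, 6, 9 (mod 12) or m = 10; ⌊m²/12⌋ otherwise. -/
def G (m : ℕ) : ℕ :=
  if m % 12 = 3 ∨ m % 12 = 6 ∨ m % 12 = 9 ∨ m = 10 then m ^ 2 / 12 + 1 else m ^ 2 / 12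

/-!
Every square p = (x, y) lies on one positive and one negative diagonal, and their lengths
n - |x - y| and n - |x + y - n - 1| add up to at least n + 1. Hence for each threshold t < n,
the positive diagonals through S longer than t together with the negative diagonals through S
longer than n - 1 - t cover S, so by hypothesis there are at least C of them. Summing
min(C, ·) of these counts over t and reflecting t ↦ n - 1 - t in the negative part gives n·C on
one side; on the other, for the C longest positive (resp. negative) diagonals through S, the
sum over t of min(C, #{diagonals longer than t}) is at most their total length (layer cake).
-/

open Finset

namespace Finset

variable {α : Type*}

/-- The witness is a set of `C` heaviest elements of `P` (or all of `P`). -/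
theorem exists_subset_card_le_forall_min_le_card_filter [DecidableEq α] (w : α → ℕ) (C : ℕ)
    (P : Finset α) :
    ∃ A ⊆ P, #A ≤ C ∧ ∀ t, min C #{a ∈ P | t < w a} ≤ #{a ∈ A | t < w a} := by
  induction C generalizing P with
  | zero => exact ⟨∅, empty_subset _, by simp, by simp⟩
  | succ C ih =>
    rcases P.eq_empty_or_nonempty with rfl | hP
    · exact ⟨∅, empty_subset _, by simp, by simp⟩
    obtain ⟨a, haP, hmax⟩ := exists_max_image P w hP
    obtain ⟨A, hAP, hAC, hA⟩ := ih (P.erase a)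
    have haA : a ∉ A := fun h => notMem_erase a P (hAP h)
    refine ⟨insert a A, insert_subset haP (hAP.trans (erase_subset a P)), ?_, fun t => ?_⟩
    · rw [card_insert_of_notMem haA]
      omega
    by_cases hta : t < w a
    · have hP : #{b ∈ P | t < w b} = #{b ∈ P.erase a | t < w b} + 1 := by
        rw [filter_erase, card_erase_of_mem (mem_filter.mpr ⟨haP, hta⟩)]
        have : 0 < #{b ∈ P | t < w b} := card_pos.mpr ⟨a, mem_filter.mpr ⟨haP, hta⟩⟩
        omega
      have hA' : #{b ∈ insert a A | t < w b} = #{b ∈ A | t < w b} + 1 := by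
        rw [filter_insert, if_pos hta, card_insert_of_notMem (fun h => haA (mem_filter.mp h).1)]
      have := hA t
      omega
    · have : {b ∈ P | t < w b} = ∅ :=
        filter_eq_empty_iff.mpr fun b hb => by have := hmax b hb; omega
      simp [this]

theorem sum_range_card_filter_lt_le_sum (w : α → ℕ) (n : ℕ) (A : Finset α) :
    ∑ t ∈ range n, #{a ∈ A | t < w a} ≤ ∑ a ∈ A, w a := by
  simp only [card_filter]
  rw [sum_comm]
  refine sum_le_sum fun a _ => ?_
  rw [← card_filter]
  calc #{t ∈ range n | t < w a} ≤ #(range (w a)) :=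
        card_le_card fun t ht => mem_range.mpr (mem_filter.mp ht).2
    _ = w a := card_range _

theorem exists_subset_card_le_sum_min_le_sum [DecidableEq α] (w : α → ℕ) (C n : ℕ)
    (P : Finset α) :
    ∃ A ⊆ P, #A ≤ C ∧ ∑ t ∈ range n, min C #{a ∈ P | t < w a} ≤ ∑ a ∈ A, w a := by
  obtain ⟨A, hAP, hAC, hA⟩ := exists_subset_card_le_forall_min_le_card_filter w C P
  exact ⟨A, hAP, hAC,
    (sum_le_sum fun t _ => hA t).trans (sum_range_card_filter_lt_le_sum w n A)⟩

end Finset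

namespace Line

theorem toNat_sub_le_length {n : ℕ} {L : Line} {lo hi : ℤ} (g : ℤ → ℤ)
    (hg : ∀ a, lo ≤ a → a ≤ hi → (a, g a) ∈ L.squares n) :
    (hi + 1 - lo).toNat ≤ L.length n := by
  calc (hi + 1 - lo).toNat = #((Icc lo hi).image fun a => (a, g a)) := by
        rw [card_image_of_injective _ fun a b h => congrArg Prod.fst h, Int.card_Icc]
    _ ≤ L.length n := card_le_card fun p hp => by
        obtain ⟨a, ha, rfl⟩ := mem_image.mp hp
        exact hg a (mem_Icc.mp ha).1 (mem_Icc.mp ha).2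

theorem sub_natAbs_le_length_posDiag (n : ℕ) (d : ℤ) :
    n - d.natAbs ≤ (posDiag d).length n := by
  have := toNat_sub_le_length (n := n) (L := posDiag d) (lo := max 1 (1 + d))
    (hi := min n (n + d)) (· - d) fun a _ _ => by
      simp only [squares, board, mem_filter, mem_product, mem_Icc, pred]
      omega
  omega

theorem sub_natAbs_le_length_negDiag (n : ℕ) (s : ℤ) :
    n - (s - (n + 1)).natAbs ≤ (negDiag s).length n := by
  have := toNat_sub_le_length (n := n) (L := negDiag s) (lo := max 1 (s - n))
    (hi := min n (s - 1)) (s - ·) fun a _ _ => by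
      simp only [squares, board, mem_filter, mem_product, mem_Icc, pred]
      omega
  omega

theorem length_posDiag_add_length_negDiag {n : ℕ} {p : ℤ × ℤ} (hp : p ∈ board n) :
    n + 1 ≤ (posDiag (p.1 - p.2)).length n + (negDiag (p.1 + p.2)).length n := by
  have h₁ := sub_natAbs_le_length_posDiag n (p.1 - p.2)
  have h₂ := sub_natAbs_le_length_negDiag n (p.1 + p.2)
  simp only [board, mem_product, mem_Icc] at hp
  omega

def posDiagsThrough (S : Finset (ℤ × ℤ)) : Finset Line := S.image fun p => posDiag (p.1 - p.2)

def negDiagsThrough (S : Finset (ℤ × ℤ)) : Finset Line := S.image fun p => negDiag (p.1 + p.2)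

variable {S : Finset (ℤ × ℤ)} {L : Line}

theorem isDiag_and_exists_pred_of_mem_diagsThrough
    (hL : L ∈ posDiagsThrough S ∪ negDiagsThrough S) : L.isDiag ∧ ∃ p ∈ S, L.pred p := by
  rcases mem_union.mp hL with hL | hL <;> obtain ⟨p, hp, rfl⟩ := mem_image.mp hL <;>
    exact ⟨trivial, p, hp, rfl⟩

theorem disjoint_posDiagsThrough_negDiagsThrough (S T : Finset (ℤ × ℤ)) :
    Disjoint (posDiagsThrough S) (negDiagsThrough T) := by
  rw [disjoint_left]
  rintro _ hp hn
  obtain ⟨p, -, rfl⟩ := mem_image.mp hp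
  obtain ⟨q, -, h⟩ := mem_image.mp hn
  exact Line.noConfusion h

theorem le_card_long_posDiags_add_card_long_negDiags {n C : ℕ} (hS : S ⊆ board n)
    (hcov : ¬ ∃ D : Finset Line, D.card ≤ C - 1 ∧ (∀ L ∈ D, L.isDiag) ∧
      ∀ p ∈ S, ∃ L ∈ D, L.pred p)
    {t : ℕ} (ht : t < n) :
    C ≤ #{L ∈ posDiagsThrough S | t < L.length n} +
      #{L ∈ negDiagsThrough S | n - 1 - t < L.length n} := by
  by_contra! hlt
  refine hcov ⟨{L ∈ posDiagsThrough S | t < L.length n} ∪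
    {L ∈ negDiagsThrough S | n - 1 - t < L.length n}, ?_, fun L hL => ?_, fun p hp => ?_⟩
  · have := card_union_le {L ∈ posDiagsThrough S | t < L.length n}
      {L ∈ negDiagsThrough S | n - 1 - t < L.length n}
    omega
  · exact (isDiag_and_exists_pred_of_mem_diagsThrough (union_subset_union
      (filter_subset _ _) (filter_subset _ _) hL)).1
  · have := length_posDiag_add_length_negDiag (hS hp)
    by_cases hpos : t < (posDiag (p.1 - p.2)).length n
    · exact ⟨_, mem_union_left _ (mem_filter.mpr ⟨mem_image_of_mem _ hp, hpos⟩), rfl⟩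
    · exact ⟨_, mem_union_right _ (mem_filter.mpr ⟨mem_image_of_mem _ hp, by omega⟩), rfl⟩

end Line

theorem long_diagonals_through_uncoverable_set_general (n C : ℕ)
    (S : Finset (ℤ × ℤ)) (hS : S ⊆ board n)
    (hcov : ¬ ∃ D : Finset Line, D.card ≤ C - 1 ∧ (∀ L ∈ D, L.isDiag) ∧
      ∀ p ∈ S, ∃ L ∈ D, L.pred p) :
    ∃ T : Finset Line, T.card ≤ 2 * C ∧ (∀ L ∈ T, L.isDiag) ∧
      (∀ L ∈ T, ∃ p ∈ S, L.pred p) ∧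
      n * C ≤ ∑ L ∈ T, L.length n := by
  obtain ⟨A, hA, hAC, hAsum⟩ := exists_subset_card_le_sum_min_le_sum (Line.length n) C n
    (Line.posDiagsThrough S)
  obtain ⟨B, hB, hBC, hBsum⟩ := exists_subset_card_le_sum_min_le_sum (Line.length n) C n
    (Line.negDiagsThrough S)
  have hAB : A ∪ B ⊆ Line.posDiagsThrough S ∪ Line.negDiagsThrough S :=
    union_subset_union hA hB
  refine ⟨A ∪ B, (card_union_le A B).trans (by omega), fun L hL =>
    (Line.isDiag_and_exists_pred_of_mem_diagsThrough (hAB hL)).1, fun L hL =>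
    (Line.isDiag_and_exists_pred_of_mem_diagsThrough (hAB hL)).2, ?_⟩
  rw [sum_union ((Line.disjoint_posDiagsThrough_negDiagsThrough S S).mono hA hB)]
  calc n * C = ∑ _t ∈ range n, C := by simp
    _ ≤ ∑ t ∈ range n, (min C #{L ∈ Line.posDiagsThrough S | t < L.length n} +
          min C #{L ∈ Line.negDiagsThrough S | n - 1 - t < L.length n}) :=
        sum_le_sum fun t ht => by
          have := Line.le_card_long_posDiags_add_card_long_negDiags hS hcov (mem_range.mp ht)
          omega
    _ = ∑ t ∈ range n, min C #{L ∈ Line.posDiagsThrough S | t < L.length n} +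
          ∑ t ∈ range n, min C #{L ∈ Line.negDiagsThrough S | t < L.length n} := by
        rw [sum_add_distrib,
          sum_range_reflect (fun t => min C #{L ∈ Line.negDiagsThrough S | t < L.length n})]
    _ ≤ ∑ L ∈ A, L.length n + ∑ L ∈ B, L.length n := add_le_add hAsum hBsum

/-- If a finite nonempty set S of board squares cannot be covered
by C − 1 diagonals, then there are at most 2C diagonals, each meeting S, whose
lengths sum to at least n·C. -/
theorem long_diagonals_through_uncoverable_set (n C : ℕ) (hn : 0 < n) (hC : 0 < C)
    (S : Finset (ℤ × ℤ)) (hS : S ⊆ board n) (hne : S.Nonempty)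
    (hcov : ¬ ∃ D : Finset Line, D.card ≤ C - 1 ∧ (∀ L ∈ D, L.isDiag) ∧
      ∀ p ∈ S, ∃ L ∈ D, L.pred p) :
    ∃ T : Finset Line, T.card ≤ 2 * C ∧ (∀ L ∈ T, L.isDiag) ∧
      (∀ L ∈ T, ∃ p ∈ S, L.pred p) ∧
      n * C ≤ ∑ L ∈ T, L.length n :=
  long_diagonals_through_uncoverable_set_general n C S hS hcov
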